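/- Let 𝔤 be a finite-dimensional abelian real Lie algebra with a nondegenerate symmetric bilinear form g, let 𝔞 be abelian with orthonormal basis {e_α}, ε_α = ±1, and let 𝔤̃ = 𝔤 ⋊ 𝔞 with orthogonal metric g̃ = g ⊕ Σ_α ε_α e^α ⊗ e^α be pseudo-Iwasawa, i.e. each φ_α := −ad(e_α)|_𝔤 is g-symmetric. Define the Ricci form r̃ic of (𝔤̃, g̃) via the Koszul product ∇̃, its curvature R̃(x,y) = ∇̃_x∇̃_y − ∇̃_y∇̃_x − ∇̃_{[x,y]}, and r̃ic(x,y) = tr(z ↦ R̃(z,x)y). Then for all v, w ∈ 𝔤 and all α, β: r̃ic(v,w) = −Σ_γ ε_γ Tr(φ_γ)·g(φ_γ(v), w), r̃ic(v, e_α) = 0, and r̃ic(e_α, e_β) = −Tr(φ_α ∘ φ_β). -/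

import Mathlib

/-!
The Koszul formula determines the connection: `∇_{e_α} = 0`, `∇_v e_α = φ_α v` and
`∇_v w = -∑ ε_γ g(φ_γ v, w) e_γ` for `v, w ∈ 𝔤`, since abelianness of `𝔤` and `𝔞` and the
symmetry of the `φ_α` kill all other Koszul terms. Projecting along the pseudo-orthonormal basis
`e`, the trace of an endomorphism `f` of `𝔤̃` is the trace of its `𝔤`-block plus
`∑ ε_β g(f e_β, e_β)`. The Ricci operator of `(e_α, e_β)` is `-φ_β φ_α` on `𝔤` and zero on `𝔞`;
that of `(v, e_α)` swaps `𝔤` and `𝔞`, so both blocks vanish; that of `(v, w)` has `𝔤`-block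
`-∑ ε_γ g(φ_γ v, w) φ_γ` plus rank-one maps whose trace `∑ ε_γ g(φ_γ² v, w)` cancels the
`𝔞`-block.
-/

/-- The Ricci form of the Koszul product `nabla` on a Lie algebra `L`:
`ricci nabla x y = tr (z ↦ R(z,x)y)` where `R(x,y) = ∇_x∇_y − ∇_y∇_x − ∇_{⁅x,y⁆}`. -/
noncomputable def ricci {L : Type*} [LieRing L] [LieAlgebra ℝ L]
    (nabla : L →ₗ[ℝ] L →ₗ[ℝ] L) (x y : L) : ℝ :=
  LinearMap.trace ℝ L
    (nabla.flip (nabla x y) - nabla x ∘ₗ nabla.flip y + nabla.flip y ∘ₗ LieAlgebra.ad ℝ L x)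

open LinearMap (BilinForm trace)
open Submodule (span)
open Set (range)

section Frame

variable {K L : Type*} [Field K] [AddCommGroup L] [Module K L] {k : ℕ}
  (B : BilinForm K L) (e : Fin k → L) (ε : Fin k → K)

/-- When `B (e α) (e β) = ε α δ_αβ` with `ε α * ε α = 1`, this is the projection onto `span e`
along the `B`-orthogonal of `e`. -/
def frameProj : Module.End K L := ∑ β, (ε β • B.flip (e β)).smulRight (e β)

variable {B e ε}

@[simp]
lemma frameProj_apply (x : L) : frameProj B e ε x = ∑ β, (ε β * B x (e β)) • e β := by
  simp [frameProj]

lemma frameProj_eq_zero {x : L} (hx : ∀ α, B x (e α) = 0) : frameProj B e ε x = 0 := by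
  simp [hx]

lemma frameProj_apply_self (he : ∀ α β, B (e α) (e β) = if α = β then ε α else 0)
    (hε : ∀ α, ε α * ε α = 1) (γ : Fin k) : frameProj B e ε (e γ) = e γ := by
  simp [he, hε]

lemma frameProj_apply_of_mem_span (he : ∀ α β, B (e α) (e β) = if α = β then ε α else 0)
    (hε : ∀ α, ε α * ε α = 1) {x : L} (hx : x ∈ span K (range e)) :
    frameProj B e ε x = x :=
  LinearMap.eqOn_span (g := LinearMap.id)
    (by rintro _ ⟨γ, rfl⟩; exact frameProj_apply_self he hε γ) hx

lemma sub_frameProj_mem {G : Submodule K L} (hsup : G ⊔ span K (range e) = ⊤)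
    (horth : ∀ v ∈ G, ∀ α, B v (e α) = 0)
    (he : ∀ α β, B (e α) (e β) = if α = β then ε α else 0) (hε : ∀ α, ε α * ε α = 1) (x : L) :
    x - frameProj B e ε x ∈ G := by
  obtain ⟨u, hu, a, ha, rfl⟩ := Submodule.mem_sup.1 (hsup ▸ Submodule.mem_top (x := x))
  rwa [map_add, frameProj_eq_zero (horth u hu), frameProj_apply_of_mem_span he hε ha, zero_add,
    add_sub_cancel_right]

theorem trace_eq_trace_add_sum_of_frame [FiniteDimensional K L] {G : Submodule K L}
    (hsup : G ⊔ span K (range e) = ⊤) (horth : ∀ v ∈ G, ∀ α, B v (e α) = 0)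
    (he : ∀ α β, B (e α) (e β) = if α = β then ε α else 0) (hε : ∀ α, ε α * ε α = 1)
    (f : Module.End K L) (g : Module.End K G)
    (hg : ∀ u : G, (g u : L) = f u - frameProj B e ε (f u)) :
    trace K L f = trace K G g + ∑ β, ε β * B (f (e β)) (e β) := by
  let π : L →ₗ[K] G :=
    (LinearMap.id - frameProj B e ε).codRestrict G (sub_frameProj_mem hsup horth he hε)
  have hg' : g = π ∘ₗ f ∘ₗ G.subtype := by
    ext u
    simp [π, hg]
  have hsplit : f = (f ∘ₗ G.subtype) ∘ₗ π + ∑ β, (ε β • B.flip (e β)).smulRight (f (e β)) := by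
    ext x
    simp [π, frameProj, map_sum, map_smul]
  conv_lhs => rw [hsplit]
  simp [map_sum, hg', LinearMap.trace_comp_comm' π (f ∘ₗ G.subtype)]

end Frame

section PseudoIwasawa

variable {L : Type*} [LieRing L] [LieAlgebra ℝ L] {k : ℕ}

/-- `L = 𝔤 ⋊ 𝔞` with `𝔤 = G` abelian, `𝔞 = span e` abelian with `B`-pseudo-orthonormal basis `e`,
and `φ α = -ad (e α)|_𝔤` symmetric for `B`. -/
structure IsAbelianPseudoIwasawa (B : BilinForm ℝ L) (G : LieIdeal ℝ L) (e : Fin k → L)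
    (ε : Fin k → ℝ) (φ : Fin k → Module.End ℝ G) : Prop where
  symm : ∀ x y, B x y = B y x
  nondegenerate : B.Nondegenerate
  sup_eq_top : G.toSubmodule ⊔ span ℝ (range e) = ⊤
  lie_mem_mem : ∀ v ∈ G, ∀ w ∈ G, ⁅v, w⁆ = 0
  lie_e_e : ∀ α β, ⁅e α, e β⁆ = 0
  orthogonal : ∀ v ∈ G, ∀ α, B v (e α) = 0
  apply_e_e : ∀ α β, B (e α) (e β) = if α = β then ε α else 0
  eps_mul_self : ∀ α, ε α * ε α = 1
  coe_phi : ∀ α (v : G), (φ α v : L) = -⁅e α, (v : L)⁆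
  phi_symm : ∀ α (v w : G), B (φ α v) w = B v (φ α w)

def IsLeviCivita (B : BilinForm ℝ L) (nabla : L →ₗ[ℝ] L →ₗ[ℝ] L) : Prop :=
  ∀ x y z, 2 * B (nabla x y) z = B ⁅x, y⁆ z - B ⁅y, z⁆ x + B ⁅z, x⁆ y

def ricciOperator (nabla : L →ₗ[ℝ] L →ₗ[ℝ] L) (x y : L) : Module.End ℝ L :=
  nabla.flip (nabla x y) - nabla x ∘ₗ nabla.flip y + nabla.flip y ∘ₗ LieAlgebra.ad ℝ L x

lemma ricci_eq_trace (nabla : L →ₗ[ℝ] L →ₗ[ℝ] L) (x y : L) :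
    ricci nabla x y = trace ℝ L (ricciOperator nabla x y) :=
  rfl

lemma ricciOperator_apply (nabla : L →ₗ[ℝ] L →ₗ[ℝ] L) (x y z : L) :
    ricciOperator nabla x y z = nabla z (nabla x y) - nabla x (nabla z y) + nabla ⁅x, z⁆ y := by
  simp [ricciOperator]

namespace IsAbelianPseudoIwasawa

variable {B : BilinForm ℝ L} {G : LieIdeal ℝ L} {e : Fin k → L} {ε : Fin k → ℝ}
  {φ : Fin k → Module.End ℝ G}

lemma lie_e_coe (h : IsAbelianPseudoIwasawa B G e ε φ) (α : Fin k) (v : G) :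
    ⁅e α, (v : L)⁆ = -(φ α v : L) := by
  rw [h.coe_phi, neg_neg]

lemma lie_coe_e (h : IsAbelianPseudoIwasawa B G e ε φ) (α : Fin k) (v : G) :
    ⁅(v : L), e α⁆ = φ α v := by
  rw [← lie_skew, h.lie_e_coe, neg_neg]

lemma lie_coe_coe (h : IsAbelianPseudoIwasawa B G e ε φ) (v w : G) : ⁅(v : L), (w : L)⁆ = 0 :=
  h.lie_mem_mem v v.2 w w.2

lemma apply_coe_e (h : IsAbelianPseudoIwasawa B G e ε φ) (v : G) (α : Fin k) :
    B v (e α) = 0 :=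
  h.orthogonal v v.2 α

lemma apply_e_coe (h : IsAbelianPseudoIwasawa B G e ε φ) (α : Fin k) (v : G) :
    B (e α) v = 0 := by
  rw [h.symm, h.apply_coe_e]

lemma apply_sum_smul_e (h : IsAbelianPseudoIwasawa B G e ε φ) (c : Fin k → ℝ) (β : Fin k) :
    B (∑ γ, c γ • e γ) (e β) = c β * ε β := by
  simp [h.apply_e_e]

lemma linearMap_ext {M : Type*} [AddCommGroup M] [Module ℝ M]
    (h : IsAbelianPseudoIwasawa B G e ε φ) {f g : L →ₗ[ℝ] M} (hG : ∀ u : G, f u = g u)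
    (he : ∀ β, f (e β) = g (e β)) : f = g := by
  refine LinearMap.ext_on (s := (G : Set L) ∪ range e) ?_ ?_
  · rw [Submodule.span_union, ← h.sup_eq_top]
    exact congrArg (· ⊔ _) (Submodule.span_eq G.toSubmodule)
  · rintro _ (hu | ⟨β, rfl⟩)
    exacts [hG ⟨_, hu⟩, he β]

lemma eq_of_apply_eq (h : IsAbelianPseudoIwasawa B G e ε φ) {x y : L}
    (hG : ∀ u : G, B x u = B y u) (he : ∀ β, B x (e β) = B y (e β)) : x = y :=
  LinearMap.ker_eq_bot.1 h.nondegenerate.ker_eq_bot (h.linearMap_ext hG he)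

variable {nabla : L →ₗ[ℝ] L →ₗ[ℝ] L}

theorem nabla_e (h : IsAbelianPseudoIwasawa B G e ε φ) (hK : IsLeviCivita B nabla) (α : Fin k) :
    nabla (e α) = 0 := by
  have hφs : ∀ β (u v : G), B (φ β u) v = B (φ β v) u := fun β u v => by
    rw [h.phi_symm, h.symm]
  refine h.linearMap_ext (fun u => h.eq_of_apply_eq (fun v => ?_) (fun β => ?_))
    (fun β => h.eq_of_apply_eq (fun v => ?_) (fun γ => ?_))
  · have := hK (e α) u v
    simp only [h.lie_e_coe, h.lie_coe_coe, h.lie_coe_e, map_neg, map_zero, LinearMap.neg_apply,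
      LinearMap.zero_apply, hφs α v u] at this ⊢
    linarith
  · have := hK (e α) u (e β)
    simp only [h.lie_e_coe, h.lie_coe_e, h.lie_e_e, map_neg, map_zero, LinearMap.neg_apply,
      LinearMap.zero_apply, h.apply_coe_e] at this ⊢
    linarith
  · have := hK (e α) (e β) v
    simp only [h.lie_e_coe, h.lie_coe_e, h.lie_e_e, map_neg, map_zero, LinearMap.neg_apply,
      LinearMap.zero_apply, h.apply_coe_e] at this ⊢
    linarith
  · have := hK (e α) (e β) (e γ)
    simp only [h.lie_e_e, map_zero, LinearMap.zero_apply] at this ⊢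
    linarith

theorem nabla_coe_e (h : IsAbelianPseudoIwasawa B G e ε φ) (hK : IsLeviCivita B nabla)
    (v : G) (α : Fin k) : nabla v (e α) = φ α v := by
  refine h.eq_of_apply_eq (fun w => ?_) (fun β => ?_)
  · have := hK v (e α) w
    simp only [h.lie_e_coe, h.lie_coe_coe, h.lie_coe_e, map_neg, map_zero, LinearMap.neg_apply,
      LinearMap.zero_apply, h.phi_symm α w v, h.symm (w : L)] at this ⊢
    linarith
  · have := hK v (e α) (e β)
    simp only [h.lie_e_coe, h.lie_coe_e, h.lie_e_e, map_neg, map_zero, LinearMap.neg_apply,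
      LinearMap.zero_apply, h.apply_coe_e] at this ⊢
    linarith

theorem nabla_coe_coe (h : IsAbelianPseudoIwasawa B G e ε φ) (hK : IsLeviCivita B nabla)
    (v w : G) : nabla v w = ∑ γ, -(ε γ * B (φ γ v) w) • e γ := by
  refine h.eq_of_apply_eq (fun u => ?_) (fun β => ?_)
  · have := hK v w u
    simp only [h.lie_coe_coe, map_zero, LinearMap.zero_apply] at this
    simp only [map_sum, LinearMap.sum_apply, map_smul, LinearMap.smul_apply, h.apply_e_coe,
      smul_zero, Finset.sum_const_zero]
    linarith
  · have := hK v w (e β)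
    simp only [h.lie_e_coe, h.lie_coe_coe, h.lie_coe_e, map_neg, map_zero, LinearMap.neg_apply,
      LinearMap.zero_apply, h.phi_symm β w v, h.symm (w : L)] at this
    rw [h.apply_sum_smul_e]
    linear_combination this / 2 + B (φ β v) w * h.eps_mul_self β

lemma frameProj_coe (h : IsAbelianPseudoIwasawa B G e ε φ) (u : G) : frameProj B e ε u = 0 :=
  frameProj_eq_zero (h.apply_coe_e u)

lemma frameProj_nabla_coe_coe (h : IsAbelianPseudoIwasawa B G e ε φ) (hK : IsLeviCivita B nabla)
    (v w : G) : frameProj B e ε (nabla v w) = nabla v w := by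
  refine frameProj_apply_of_mem_span h.apply_e_e h.eps_mul_self ?_
  rw [h.nabla_coe_coe hK]
  exact Submodule.sum_mem _ fun γ _ => Submodule.smul_mem _ _ (Submodule.subset_span ⟨γ, rfl⟩)

lemma trace_eq_trace_add_sum [FiniteDimensional ℝ L] (h : IsAbelianPseudoIwasawa B G e ε φ)
    (f : Module.End ℝ L) (g : Module.End ℝ G)
    (hg : ∀ u : G, (g u : L) = f u - frameProj B e ε (f u)) :
    trace ℝ L f = trace ℝ G g + ∑ β, ε β * B (f (e β)) (e β) :=
  trace_eq_trace_add_sum_of_frame h.sup_eq_top h.orthogonal h.apply_e_e h.eps_mul_self f g hg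

theorem ricci_e_e [FiniteDimensional ℝ L] (h : IsAbelianPseudoIwasawa B G e ε φ)
    (hK : IsLeviCivita B nabla) (α β : Fin k) :
    ricci nabla (e α) (e β) = -trace ℝ G (φ α ∘ₗ φ β) := by
  have hG : ∀ u : G, ((-(φ β ∘ₗ φ α)) u : L) = ricciOperator nabla (e α) (e β) u := fun u => by
    simp [ricciOperator_apply, h.nabla_e hK, h.lie_e_coe, h.nabla_coe_e hK]
  have hA : ∀ γ, ricciOperator nabla (e α) (e β) (e γ) = 0 := fun γ => by
    simp [ricciOperator_apply, h.nabla_e hK, h.lie_e_e]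
  rw [ricci_eq_trace, h.trace_eq_trace_add_sum _ _ fun u => by rw [← hG, h.frameProj_coe, sub_zero]]
  simp [hA, LinearMap.trace_comp_comm' (φ α)]

theorem ricci_coe_e [FiniteDimensional ℝ L] (h : IsAbelianPseudoIwasawa B G e ε φ)
    (hK : IsLeviCivita B nabla) (v : G) (α : Fin k) : ricci nabla v (e α) = 0 := by
  have hG : ∀ u : G, ricciOperator nabla v (e α) u = nabla u (φ α v) - nabla v (φ α u) :=
    fun u => by simp [ricciOperator_apply, h.nabla_coe_e hK, h.lie_coe_coe]
  have hA : ∀ γ, ricciOperator nabla v (e α) (e γ) = φ α (φ γ v) := fun γ => by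
    simp [ricciOperator_apply, h.nabla_e hK, h.lie_coe_e, h.nabla_coe_e hK]
  rw [ricci_eq_trace, h.trace_eq_trace_add_sum _ 0 fun u => by
    rw [hG, map_sub, h.frameProj_nabla_coe_coe hK, h.frameProj_nabla_coe_coe hK]; simp]
  simp [hA, h.apply_coe_e]

theorem ricci_coe_coe [FiniteDimensional ℝ L] (h : IsAbelianPseudoIwasawa B G e ε φ)
    (hK : IsLeviCivita B nabla) (v w : G) :
    ricci nabla v w = -∑ γ, ε γ * trace ℝ G (φ γ) * B (φ γ v) w := by
  have hnabla_sum : ∀ (u : G) (c : Fin k → ℝ),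
      nabla u (∑ γ, c γ • e γ) = ∑ γ, c γ • (φ γ u : L) := fun u c => by
    simp [map_sum, h.nabla_coe_e hK]
  let ψ : Fin k → G →ₗ[ℝ] ℝ := fun γ => B.flip w ∘ₗ G.toSubmodule.subtype ∘ₗ φ γ
  let g : Module.End ℝ G := ∑ γ, (-(ε γ * B (φ γ v) w) • φ γ + (ε γ • ψ γ).smulRight (φ γ v))
  have hG : ∀ u : G, (g u : L) = ricciOperator nabla v w u := fun u => by
    simp [g, ψ, ricciOperator_apply, h.nabla_coe_coe hK, hnabla_sum, h.lie_coe_coe,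
      Finset.sum_add_distrib]
  have hA : ∀ β, ε β * B (ricciOperator nabla v w (e β)) (e β) = -(ε β * B (φ β (φ β v)) w) :=
    fun β => by
    simp only [ricciOperator_apply, h.nabla_e hK, LinearMap.zero_apply, map_zero, sub_zero,
      zero_add, h.lie_coe_e, h.nabla_coe_coe hK, h.apply_sum_smul_e]
    linear_combination -(ε β * B (φ β (φ β v)) w) * h.eps_mul_self β
  rw [ricci_eq_trace, h.trace_eq_trace_add_sum _ g fun u => by rw [← hG, h.frameProj_coe, sub_zero]]
  simp only [hA, g, map_sum, map_add, map_smul, LinearMap.trace_smulRight,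
    ← Finset.sum_add_distrib, ← Finset.sum_neg_distrib]
  refine Finset.sum_congr rfl fun γ _ => ?_
  simp only [ψ, smul_eq_mul, LinearMap.smul_apply, LinearMap.coe_comp, Submodule.coe_subtype,
    Function.comp_apply, BilinForm.flip_apply]
  ring

end IsAbelianPseudoIwasawa

end PseudoIwasawa

theorem stmt_11_general (L : Type*) [LieRing L] [LieAlgebra ℝ L] [FiniteDimensional ℝ L]
    (Btilde : LinearMap.BilinForm ℝ L) (hBsymm : ∀ x y : L, Btilde x y = Btilde y x)
    (hBnondeg : Btilde.Nondegenerate)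
    (G : LieIdeal ℝ L)
    -- the nilpotent ideal `𝔤` is abelian
    (hGabelian : ∀ v ∈ G, ∀ w ∈ G, ⁅v, w⁆ = 0)
    (k : ℕ) (e : Fin k → L) (ε : Fin k → ℝ) (hε : ∀ α, ε α = 1 ∨ ε α = -1)
    (hsup : G.toSubmodule ⊔ Submodule.span ℝ (Set.range e) = ⊤)
    (hAabelian : ∀ α β, ⁅e α, e β⁆ = 0)
    (horth : ∀ v ∈ G, ∀ α, Btilde v (e α) = 0)
    (horthA : ∀ α β, Btilde (e α) (e β) = if α = β then ε α else 0)
    (φ : Fin k → (↥G →ₗ[ℝ] ↥G)) (hφ : ∀ α (v : ↥G), ((φ α v : L)) = -⁅e α, (v : L)⁆)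
    -- pseudo-Iwasawa condition: each `φ_α` is `g`-symmetric
    (hIwasawa : ∀ α (v w : ↥G), Btilde (φ α v : L) (w : L) = Btilde (v : L) (φ α w : L))
    (nabla : L →ₗ[ℝ] L →ₗ[ℝ] L)
    (hKoszul : ∀ x y z : L,
      2 * Btilde (nabla x y) z = Btilde ⁅x, y⁆ z - Btilde ⁅y, z⁆ x + Btilde ⁅z, x⁆ y) :
    (∀ v w : ↥G,
      ricci nabla (v : L) (w : L)
        = -∑ γ, ε γ * LinearMap.trace ℝ ↥G (φ γ) * Btilde (φ γ v : L) (w : L)) ∧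
    (∀ (v : ↥G) (α : Fin k), ricci nabla (v : L) (e α) = 0) ∧
    (∀ α β : Fin k,
      ricci nabla (e α) (e β) = -LinearMap.trace ℝ ↥G (φ α ∘ₗ φ β)) := by
  have h : IsAbelianPseudoIwasawa Btilde G e ε φ :=
    { symm := hBsymm
      nondegenerate := hBnondeg
      sup_eq_top := hsup
      lie_mem_mem := hGabelian
      lie_e_e := hAabelian
      orthogonal := horth
      apply_e_e := horthA
      eps_mul_self := fun α => by rcases hε α with hα | hα <;> simp [hα]
      coe_phi := hφ
      phi_symm := hIwasawa }
  exact ⟨h.ricci_coe_coe hKoszul, h.ricci_coe_e hKoszul, h.ricci_e_e hKoszul⟩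

/-- Ricci curvature of an abelian pseudo-Iwasawa standard decomposition `𝔤̃ = 𝔤 ⋊ 𝔞`:
`r̃ic(v,w) = −Σ_γ ε_γ Tr(φ_γ) g(φ_γ v, w)`, `r̃ic(v, e_α) = 0`,
`r̃ic(e_α, e_β) = −Tr(φ_α ∘ φ_β)`. -/
theorem stmt_11 (L : Type*) [LieRing L] [LieAlgebra ℝ L] [FiniteDimensional ℝ L]
    (Btilde : LinearMap.BilinForm ℝ L) (hBsymm : ∀ x y : L, Btilde x y = Btilde y x)
    (hBnondeg : Btilde.Nondegenerate)
    (G : LieIdeal ℝ L)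
    -- the nilpotent ideal `𝔤` is abelian
    (hGabelian : ∀ v ∈ G, ∀ w ∈ G, ⁅v, w⁆ = 0)
    (hGnondeg : ∀ v ∈ G, (∀ w ∈ G, Btilde v w = 0) → v = 0)
    (k : ℕ) (e : Fin k → L) (ε : Fin k → ℝ) (hε : ∀ α, ε α = 1 ∨ ε α = -1)
    (hind : LinearIndependent ℝ e)
    (hsup : G.toSubmodule ⊔ Submodule.span ℝ (Set.range e) = ⊤)
    (hinf : G.toSubmodule ⊓ Submodule.span ℝ (Set.range e) = ⊥)
    (hAabelian : ∀ α β, ⁅e α, e β⁆ = 0)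
    (horth : ∀ v ∈ G, ∀ α, Btilde v (e α) = 0)
    (horthA : ∀ α β, Btilde (e α) (e β) = if α = β then ε α else 0)
    (φ : Fin k → (↥G →ₗ[ℝ] ↥G)) (hφ : ∀ α (v : ↥G), ((φ α v : L)) = -⁅e α, (v : L)⁆)
    -- pseudo-Iwasawa condition: each `φ_α` is `g`-symmetric
    (hIwasawa : ∀ α (v w : ↥G), Btilde (φ α v : L) (w : L) = Btilde (v : L) (φ α w : L))
    (nabla : L →ₗ[ℝ] L →ₗ[ℝ] L)
    (hKoszul : ∀ x y z : L,
      2 * Btilde (nabla x y) z = Btilde ⁅x, y⁆ z - Btilde ⁅y, z⁆ x + Btilde ⁅z, x⁆ y) :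
    (∀ v w : ↥G,
      ricci nabla (v : L) (w : L)
        = -∑ γ, ε γ * LinearMap.trace ℝ ↥G (φ γ) * Btilde (φ γ v : L) (w : L)) ∧
    (∀ (v : ↥G) (α : Fin k), ricci nabla (v : L) (e α) = 0) ∧
    (∀ α β : Fin k,
      ricci nabla (e α) (e β) = -LinearMap.trace ℝ ↥G (φ α ∘ₗ φ β)) :=
  stmt_11_general L Btilde hBsymm hBnondeg G hGabelian k e ε hε hsup hAabelian horth horthA φ hφ
    hIwasawa nabla hKoszul
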